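/- arXiv:2110.11271 — 3 statements merged into one kernel-verified Lean document; each statement's English description precedes it below -/
import Mathlib

section
/- For exponential family distributions P1, P2 with parameters θ1, θ2 in a family where sup_θ λ_max(E_θ[xx^⊤]) ≤ λ_max, if ||θ1 − θ2||² ≤ 4/λ_max then the Bhattacharyya coefficient satisfies BC(P1, P2) ≥ 1/2. -/
/-!
Write `θ₁ = m + w`, `θ₂ = m - w` and `Y = ⟪w, x⟫`. Since `√(p₁ p₂) = h e^⟪m, x⟫ / √(Z₁ Z₂)`,
the coefficient is `Z(m) / √(Z₁ Z₂) ≥ 2 Z(m) / (Z₁ + Z₂)`. Multiplying the elementary bound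
`cosh Y - 1 ≤ (Y² / 2) cosh Y` by `2 h e^⟪m, x⟫` and integrating gives
`Z₁ + Z₂ ≤ 2 Z(m) + (Z₁ E₁[Y²] + Z₂ E₂[Y²]) / 2`, and the moment bound together with
`λ_max ‖w‖² ≤ 1` gives `Eᵢ[Y²] ≤ 1`. Hence `Z₁ + Z₂ ≤ 4 Z(m)` and the coefficient is at least `1/2`.
-/

open MeasureTheory Real
open scoped Nat

namespace Real

lemma one_add_sq_div_two_le_cosh (x : ℝ) : 1 + x ^ 2 / 2 ≤ cosh x := by
  have := sum_le_hasSum (Finset.range 2) (fun n _ => by rw [pow_mul]; positivity) x.hasSum_cosh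
  simpa [Finset.sum_range_succ] using this

lemma cosh_sub_one_le_sq_div_two_mul_cosh (x : ℝ) : cosh x - 1 ≤ x ^ 2 / 2 * cosh x := by
  have htail : HasSum (fun n ↦ x ^ (2 * n + 2) / ↑(2 * n + 2)!) (cosh x - 1) := by
    simpa [mul_add] using (hasSum_nat_add_iff' 1).2 x.hasSum_cosh
  refine hasSum_le (fun n ↦ ?_) htail (x.hasSum_cosh.mul_left (x ^ 2 / 2))
  have hfac : 2 * (2 * n)! ≤ (2 * n + 2)! := by
    rw [Nat.factorial_succ, Nat.factorial_succ, ← mul_assoc]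
    gcongr; nlinarith
  calc x ^ (2 * n + 2) / ↑(2 * n + 2)! ≤ x ^ (2 * n + 2) / (2 * (2 * n)! : ℕ) := by
        gcongr
        · rw [pow_add, pow_mul]; positivity
    _ = x ^ 2 / 2 * (x ^ (2 * n) / (2 * n)!) := by push_cast; ring

end Real

lemma integral_mul_dotProduct_sq_le {ι : Type*} [Fintype ι] {μ : Measure (ι → ℝ)}
    {f : (ι → ℝ) → ℝ} {c : ℝ} (hf : ∀ v : ι → ℝ, ∑ i, v i ^ 2 = 1 → ∫ x, f x * (v ⬝ᵥ x) ^ 2 ∂μ ≤ c)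
    (w : ι → ℝ) : ∫ x, f x * (w ⬝ᵥ x) ^ 2 ∂μ ≤ c * ∑ i, w i ^ 2 := by
  set s := ∑ i, w i ^ 2
  rcases (show 0 ≤ s by positivity).eq_or_lt with hs | hs
  · obtain rfl : w = 0 := funext fun i ↦ pow_eq_zero_iff two_ne_zero |>.1 <|
      (Finset.sum_eq_zero_iff_of_nonneg fun i _ ↦ sq_nonneg (w i)).1 hs.symm i (Finset.mem_univ i)
    simp [← hs]
  · set v := (√s)⁻¹ • w
    have hv : ∑ i, v i ^ 2 = 1 := by
      simp only [v, Pi.smul_apply, smul_eq_mul, mul_pow, inv_pow, sq_sqrt hs.le, ← Finset.mul_sum]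
      exact inv_mul_cancel₀ hs.ne'
    have hscale : ∀ x, f x * (w ⬝ᵥ x) ^ 2 = s * (f x * (v ⬝ᵥ x) ^ 2) := fun x ↦ by
      rw [smul_dotProduct, smul_eq_mul, mul_pow, inv_pow, sq_sqrt hs.le]
      field_simp
    calc ∫ x, f x * (w ⬝ᵥ x) ^ 2 ∂μ = s * ∫ x, f x * (v ⬝ᵥ x) ^ 2 ∂μ := by
          simp_rw [hscale]; exact integral_const_mul _ _
      _ ≤ s * c := by gcongr; exact hf v hv
      _ = c * s := mul_comm _ _

lemma sqrt_mul_le_add_div_two {a b : ℝ} (ha : 0 ≤ a) (hb : 0 ≤ b) : √(a * b) ≤ (a + b) / 2 :=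
  sqrt_le_iff.2 ⟨by linarith, by nlinarith [sq_nonneg (a - b)]⟩

section ExpTilt

variable {ι : Type*} [Fintype ι] (h : (ι → ℝ) → ℝ)

noncomputable def expTilt (θ x : ι → ℝ) : ℝ := h x * exp (θ ⬝ᵥ x)

lemma expTilt_add (θ η x : ι → ℝ) : expTilt h (θ + η) x = expTilt h θ x * exp (η ⬝ᵥ x) := by
  rw [expTilt, expTilt, add_dotProduct, exp_add, mul_assoc]

lemma expTilt_add_mul_expTilt_add_neg (m w x : ι → ℝ) :
    expTilt h (m + w) x * expTilt h (m + -w) x = expTilt h m x ^ 2 := by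
  rw [expTilt_add, expTilt_add, neg_dotProduct, exp_neg]
  field_simp

variable {h}

lemma expTilt_nonneg (hh : 0 ≤ h) (θ x : ι → ℝ) : 0 ≤ expTilt h θ x :=
  mul_nonneg (hh x) (exp_pos _).le

lemma expTilt_mul_sq_le (hh : 0 ≤ h) (θ w x : ι → ℝ) :
    expTilt h θ x * (w ⬝ᵥ x) ^ 2 ≤ expTilt h (θ + w) x + expTilt h (θ + -w) x := by
  calc expTilt h θ x * (w ⬝ᵥ x) ^ 2 ≤ expTilt h θ x * (2 * cosh (w ⬝ᵥ x)) := by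
        gcongr
        · exact expTilt_nonneg hh θ x
        · linarith [one_add_sq_div_two_le_cosh (w ⬝ᵥ x)]
    _ = expTilt h (θ + w) x + expTilt h (θ + -w) x := by
        rw [expTilt_add, expTilt_add, neg_dotProduct, cosh_eq]; ring

lemma expTilt_add_add_expTilt_add_neg_le (hh : 0 ≤ h) (m w x : ι → ℝ) :
    expTilt h (m + w) x + expTilt h (m + -w) x ≤
      2 * expTilt h m x +
        (expTilt h (m + w) x * (w ⬝ᵥ x) ^ 2 + expTilt h (m + -w) x * (w ⬝ᵥ x) ^ 2) / 2 := by
  have hcosh : expTilt h (m + w) x + expTilt h (m + -w) x = 2 * expTilt h m x * cosh (w ⬝ᵥ x) := by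
    rw [expTilt_add, expTilt_add, neg_dotProduct, cosh_eq]; ring
  have := mul_le_mul_of_nonneg_left (cosh_sub_one_le_sq_div_two_mul_cosh (w ⬝ᵥ x))
    (mul_nonneg zero_le_two (expTilt_nonneg hh m x))
  rw [← add_mul, hcosh]
  linarith

variable {μ : Measure (ι → ℝ)}

lemma integrable_expTilt_mul_sq (hh : 0 ≤ h) (hint : ∀ θ, Integrable (expTilt h θ) μ)
    (θ w : ι → ℝ) : Integrable (fun x ↦ expTilt h θ x * (w ⬝ᵥ x) ^ 2) μ := by
  refine ((hint (θ + w)).add (hint (θ + -w))).mono'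
    ((hint θ).aestronglyMeasurable.mul (by fun_prop)) (.of_forall fun x ↦ ?_)
  rw [Real.norm_of_nonneg (mul_nonneg (expTilt_nonneg hh θ x) (sq_nonneg _))]
  exact expTilt_mul_sq_le hh θ w x

lemma integral_expTilt_add_add_integral_expTilt_add_neg_le (hh : 0 ≤ h)
    (hint : ∀ θ, Integrable (expTilt h θ) μ) {m w : ι → ℝ}
    (hpos : ∫ x, expTilt h (m + w) x * (w ⬝ᵥ x) ^ 2 ∂μ ≤ ∫ x, expTilt h (m + w) x ∂μ)
    (hneg : ∫ x, expTilt h (m + -w) x * (w ⬝ᵥ x) ^ 2 ∂μ ≤ ∫ x, expTilt h (m + -w) x ∂μ) :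
    ∫ x, expTilt h (m + w) x ∂μ + ∫ x, expTilt h (m + -w) x ∂μ ≤ 4 * ∫ x, expTilt h m x ∂μ := by
  have hsq := fun θ ↦ integrable_expTilt_mul_sq hh hint θ w
  have hsq₂ : Integrable (fun x ↦
      (expTilt h (m + w) x * (w ⬝ᵥ x) ^ 2 + expTilt h (m + -w) x * (w ⬝ᵥ x) ^ 2) / 2) μ :=
    ((hsq _).add (hsq _)).div_const 2
  have : ∫ x, (expTilt h (m + w) x + expTilt h (m + -w) x) ∂μ ≤
      ∫ x, (2 * expTilt h m x +
        (expTilt h (m + w) x * (w ⬝ᵥ x) ^ 2 + expTilt h (m + -w) x * (w ⬝ᵥ x) ^ 2) / 2) ∂μ :=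
    integral_mono ((hint _).add (hint _))
    (((hint m).const_mul 2).add hsq₂) (fun x ↦ expTilt_add_add_expTilt_add_neg_le hh m w x)
  rw [integral_add (hint _) (hint _), integral_add ((hint m).const_mul 2) hsq₂,
    integral_const_mul, integral_div,
    integral_add (hsq _) (hsq _)] at this
  linarith

lemma sqrt_expTilt_div_mul_expTilt_div (hh : 0 ≤ h) (m w x : ι → ℝ) (a b : ℝ) :
    √(expTilt h (m + w) x / a * (expTilt h (m + -w) x / b)) = expTilt h m x / √(a * b) := by
  rw [div_mul_div_comm, expTilt_add_mul_expTilt_add_neg, sqrt_div (sq_nonneg _),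
    sqrt_sq (expTilt_nonneg hh m x)]

end ExpTilt

/-- For exponential family distributions with parameters `θ1, θ2`, if the second-moment
matrices satisfy `λ_max(E_θ[xxᵀ]) ≤ λmax` uniformly and `‖θ1 − θ2‖² ≤ 4/λmax`, then the
Bhattacharyya coefficient satisfies `BC(P1, P2) ≥ 1/2`. -/
theorem bhattacharyya_lower_bound {d : ℕ}
    (h : (Fin d → ℝ) → ℝ) (hh : ∀ x, 0 ≤ h x)
    (Z : (Fin d → ℝ) → ℝ)
    (hZ : ∀ θ, Z θ = ∫ x, h x * Real.exp (∑ i, θ i * x i))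
    (hZpos : ∀ θ, 0 < Z θ)
    (p : (Fin d → ℝ) → (Fin d → ℝ) → ℝ)
    (hp : ∀ θ x, p θ x = h x * Real.exp ((∑ i, θ i * x i) - Real.log (Z θ)))
    (lammax : ℝ) (hlam : 0 < lammax)
    (hmom : ∀ θ (v : Fin d → ℝ), ∑ i, v i ^ 2 = 1 →
      ∫ x, p θ x * (∑ i, v i * x i) ^ 2 ≤ lammax)
    (θ1 θ2 : Fin d → ℝ)
    (hdist : ∑ i, (θ1 i - θ2 i) ^ 2 ≤ 4 / lammax) :
    (1 / 2 : ℝ) ≤ ∫ x, Real.sqrt (p θ1 x * p θ2 x) := by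
  obtain rfl : p = fun θ x ↦ expTilt h θ x / Z θ := by
    funext θ x; rw [hp, exp_sub, exp_log (hZpos θ), ← mul_div_assoc]; rfl
  obtain rfl : Z = fun θ ↦ ∫ x, expTilt h θ x := funext hZ
  beta_reduce at hZpos hmom ⊢
  -- `Z θ ≠ 0` rules out the junk value of a non-integrable integrand.
  have hint θ : Integrable (expTilt h θ) := .of_integral_ne_zero (hZpos θ).ne'
  obtain ⟨m, w, rfl, rfl⟩ : ∃ m w : Fin d → ℝ, θ1 = m + w ∧ θ2 = m + -w :=
    ⟨(2 : ℝ)⁻¹ • (θ1 + θ2), (2 : ℝ)⁻¹ • (θ1 - θ2), by module, by module⟩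
  have hw : lammax * ∑ i, w i ^ 2 ≤ 1 := by
    have hsum : ∑ i, ((m + w) i - (m + -w) i) ^ 2 = 4 * ∑ i, w i ^ 2 := by
      rw [Finset.mul_sum]; congr 1; ext i; simp only [Pi.add_apply, Pi.neg_apply]; ring
    rw [hsum, le_div_iff₀' hlam] at hdist
    linarith
  have hmom' θ : ∫ x, expTilt h θ x * (w ⬝ᵥ x) ^ 2 ≤ ∫ x, expTilt h θ x := by
    calc ∫ x, expTilt h θ x * (w ⬝ᵥ x) ^ 2 ≤ (lammax * ∫ x, expTilt h θ x) * ∑ i, w i ^ 2 :=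
          integral_mul_dotProduct_sq_le (fun v hv ↦ ?_) w
      _ ≤ ∫ x, expTilt h θ x := by nlinarith [hZpos θ]
    have := hmom θ v hv
    simp_rw [div_mul_eq_mul_div] at this
    rwa [integral_div, div_le_iff₀ (hZpos θ)] at this
  have hZsum := integral_expTilt_add_add_integral_expTilt_add_neg_le (fun x ↦ hh x) hint
    (m := m) (hmom' _) (hmom' _)
  simp_rw [sqrt_expTilt_div_mul_expTilt_div (fun x ↦ hh x)]
  rw [integral_div, le_div_iff₀ (sqrt_pos.2 (mul_pos (hZpos _) (hZpos _)))]
  have hamgm := sqrt_mul_le_add_div_two (hZpos (m + w)).le (hZpos (m + -w)).le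
  linarith
end

section
/- For exponential family densities p, q with parameters θ, θ_q, and any unit vector v: ∫ min{p,q}(v^⊤T(x))² dx ≥ (1/(2λ_max)) · B^{-2} · (E_{(θ+θ_q)/2}[(v^⊤T(x))²])², where B = √(Z(θ)Z(θ_q))/Z((θ+θ_q)/2) and λ_max bounds the largest eigenvalue of E_θ'[T(x)T(x)^⊤] uniformly. -/
open MeasureTheory Real Matrix

/-!
Pointwise `min{p,q} · max{p,q} = p q`, and because `θm` is the midpoint of `θ` and `θq`,
`√(p_θ p_θq) = B⁻¹ p_θm`. Cauchy–Schwarz therefore gives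
`(B⁻¹ E_θm[(vᵀT)²])² ≤ ∫ min{p,q} (vᵀT)² · ∫ (p + q) (vᵀT)²`, and the last factor is at most
`2 λmax`. All moments involved are finite since `Z` is finite at `θ' ± v` and `t² ≤ 2 (eᵗ + e⁻ᵗ)`.
-/

lemma sq_le_two_mul_exp_add_exp_neg (t : ℝ) : t ^ 2 ≤ 2 * (exp t + exp (-t)) := by
  have h := quadratic_le_exp_of_nonneg (abs_nonneg t)
  rw [sq_abs] at h
  rcases abs_cases t with ⟨ht, hsign⟩ | ⟨ht, hsign⟩ <;> rw [ht] at h <;>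
    nlinarith [exp_pos t, exp_pos (-t)]

section

variable {α : Type*} [MeasurableSpace α] {μ : Measure α}

lemma aemeasurable_mul_exp_mul_sq {g a b : α → ℝ} (hg : ∀ x, 0 ≤ g x)
    (ha : AEMeasurable (fun x => g x * exp (a x)) μ)
    (hab : AEMeasurable (fun x => g x * exp (a x + b x)) μ) :
    AEMeasurable (fun x => g x * exp (a x) * b x ^ 2) μ := by
  -- `b` itself need not be measurable; where `g > 0` it is the log of a ratio of the given functions.
  have hlog : (fun x => g x * exp (a x) * b x ^ 2) =
      fun x => g x * exp (a x) * log (g x * exp (a x + b x) / (g x * exp (a x))) ^ 2 := by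
    funext x
    rcases (hg x).eq_or_lt with h0 | hpos
    · simp [← h0]
    · rw [exp_add, mul_div_mul_comm, div_self hpos.ne', mul_div_cancel_left₀ _ (exp_pos _).ne',
        one_mul, log_exp]
  rw [hlog]
  exact ha.mul ((measurable_log.comp_aemeasurable (hab.div ha)).pow_const 2)

lemma integrable_mul_exp_mul_sq {g a b : α → ℝ} (hg : ∀ x, 0 ≤ g x)
    (ha : AEMeasurable (fun x => g x * exp (a x)) μ)
    (hab : Integrable (fun x => g x * exp (a x + b x)) μ)
    (hamb : Integrable (fun x => g x * exp (a x - b x)) μ) :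
    Integrable (fun x => g x * exp (a x) * b x ^ 2) μ := by
  refine Integrable.mono' ((hab.add hamb).const_mul 2)
    (aemeasurable_mul_exp_mul_sq hg ha hab.aemeasurable).aestronglyMeasurable
    (Filter.Eventually.of_forall fun x => ?_)
  have hga : 0 ≤ g x * exp (a x) := mul_nonneg (hg x) (exp_pos _).le
  rw [norm_of_nonneg (mul_nonneg hga (sq_nonneg _)), Pi.add_apply, exp_add, sub_eq_add_neg,
    exp_add]
  nlinarith [mul_le_mul_of_nonneg_left (sq_le_two_mul_exp_add_exp_neg (b x)) hga]

lemma sq_integral_sqrt_mul_le {F G : α → ℝ} (hF0 : 0 ≤ F) (hG0 : 0 ≤ G)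
    (hF : Integrable F μ) (hG : Integrable G μ) :
    (∫ x, √(F x * G x) ∂μ) ^ 2 ≤ (∫ x, F x ∂μ) * ∫ x, G x ∂μ := by
  have hL2 : ∀ {H : α → ℝ}, 0 ≤ H → Integrable H μ →
      MemLp (fun x => √(H x)) (ENNReal.ofReal 2) μ := by
    intro H hH0 hH
    rw [ENNReal.ofReal_ofNat, memLp_two_iff_integrable_sq
      (continuous_sqrt.comp_aestronglyMeasurable hH.1)]
    simpa only [sq_sqrt (hH0 _)] using hH
  have holder := integral_mul_le_Lp_mul_Lq_of_nonneg HolderConjugate.two_two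
    (Filter.Eventually.of_forall fun x => sqrt_nonneg (F x))
    (Filter.Eventually.of_forall fun x => sqrt_nonneg (G x)) (hL2 hF0 hF) (hL2 hG0 hG)
  simp only [rpow_two, sq_sqrt (hF0 _), sq_sqrt (hG0 _), ← sqrt_mul (hF0 _)] at holder
  calc (∫ x, √(F x * G x) ∂μ) ^ 2
      ≤ ((∫ x, F x ∂μ) ^ (1 / 2 : ℝ) * (∫ x, G x ∂μ) ^ (1 / 2 : ℝ)) ^ 2 :=
        pow_le_pow_left₀ (integral_nonneg fun x => sqrt_nonneg _) holder 2
    _ = (∫ x, F x ∂μ) * ∫ x, G x ∂μ := by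
        rw [← sqrt_eq_rpow, ← sqrt_eq_rpow, ← sqrt_mul (integral_nonneg hF0),
          sq_sqrt (mul_nonneg (integral_nonneg hF0) (integral_nonneg hG0))]

lemma sq_integral_sqrt_mul_mul_le {u w f : α → ℝ} (hu : 0 ≤ u) (hw : 0 ≤ w) (hf : 0 ≤ f)
    (huf : Integrable (fun x => u x * f x) μ) (hwf : Integrable (fun x => w x * f x) μ) :
    (∫ x, √(u x * w x) * f x ∂μ) ^ 2 ≤
      (∫ x, min (u x) (w x) * f x ∂μ) * ∫ x, (u x + w x) * f x ∂μ := by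
  have hmin : Integrable (fun x => min (u x) (w x) * f x) μ := by
    convert huf.inf hwf using 1
    exact funext fun x => min_mul_of_nonneg _ _ (hf x)
  have hmax : Integrable (fun x => max (u x) (w x) * f x) μ := by
    convert huf.sup hwf using 1
    exact funext fun x => max_mul_of_nonneg _ _ (hf x)
  have hmin_max : ∀ x,
      √(u x * w x) * f x = √(min (u x) (w x) * f x * (max (u x) (w x) * f x)) := by
    intro x
    rw [mul_mul_mul_comm, min_mul_max, sqrt_mul (mul_nonneg (hu x) (hw x)), sqrt_mul_self (hf x)]
  calc (∫ x, √(u x * w x) * f x ∂μ) ^ 2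
      ≤ (∫ x, min (u x) (w x) * f x ∂μ) * ∫ x, max (u x) (w x) * f x ∂μ := by
        simp only [hmin_max]
        exact sq_integral_sqrt_mul_le (fun x => mul_nonneg (le_min (hu x) (hw x)) (hf x))
          (fun x => mul_nonneg (le_max_of_le_left (hu x)) (hf x)) hmin hmax
    _ ≤ (∫ x, min (u x) (w x) * f x ∂μ) * ∫ x, (u x + w x) * f x ∂μ := by
        refine mul_le_mul_of_nonneg_left (integral_mono hmax ?_ fun x => ?_)
          (integral_nonneg fun x => mul_nonneg (le_min (hu x) (hw x)) (hf x))
        · simp only [add_mul]; exact huf.add hwf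
        · exact mul_le_mul_of_nonneg_right (max_le_add_of_nonneg (hu x) (hw x)) (hf x)

end

section ExponentialFamily

variable {α ι : Type*} [Fintype ι]
  {h : α → ℝ} {T : α → ι → ℝ} {Z : (ι → ℝ) → ℝ} {p : (ι → ℝ) → α → ℝ}

lemma density_eq_div (hZpos : ∀ θ, 0 < Z θ)
    (hp : ∀ θ x, p θ x = h x * exp (θ ⬝ᵥ T x - log (Z θ))) (θ : ι → ℝ) (x : α) :
    p θ x = h x * exp (θ ⬝ᵥ T x) / Z θ := by
  rw [hp, exp_sub, exp_log (hZpos θ), mul_div_assoc]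

lemma density_nonneg (hh : ∀ x, 0 ≤ h x)
    (hp : ∀ θ x, p θ x = h x * exp (θ ⬝ᵥ T x - log (Z θ))) (θ : ι → ℝ) (x : α) : 0 ≤ p θ x := by
  rw [hp]
  exact mul_nonneg (hh x) (exp_pos _).le

variable [MeasurableSpace α] {μ : Measure α} in
lemma integrable_density_mul_sq (hh : ∀ x, 0 ≤ h x)
    (hZ : ∀ θ, Z θ = ∫ x, h x * exp (θ ⬝ᵥ T x) ∂μ) (hZpos : ∀ θ, 0 < Z θ)
    (hp : ∀ θ x, p θ x = h x * exp (θ ⬝ᵥ T x - log (Z θ))) (θ v : ι → ℝ) :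
    Integrable (fun x => p θ x * (v ⬝ᵥ T x) ^ 2) μ := by
  have hexp : ∀ θ, Integrable (fun x => h x * exp (θ ⬝ᵥ T x)) μ := fun θ =>
    .of_integral_ne_zero (hZ θ ▸ (hZpos θ).ne')
  have hmoment := integrable_mul_exp_mul_sq hh (hexp θ).aemeasurable
    (by simpa only [add_dotProduct] using hexp (θ + v))
    (by simpa only [sub_dotProduct] using hexp (θ - v))
  convert hmoment.div_const (Z θ) using 1
  funext x
  rw [density_eq_div hZpos hp]
  ring

lemma sqrt_density_mul_density (hh : ∀ x, 0 ≤ h x) (hZpos : ∀ θ, 0 < Z θ)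
    (hp : ∀ θ x, p θ x = h x * exp (θ ⬝ᵥ T x - log (Z θ)))
    {θ θq θm : ι → ℝ} (hθm : ∀ i, θm i = (θ i + θq i) / 2) (x : α) :
    √(p θ x * p θq x) = (√(Z θ * Z θq) / Z θm)⁻¹ * p θm x := by
  have hmid : θm ⬝ᵥ T x = (θ ⬝ᵥ T x + θq ⬝ᵥ T x) / 2 := by
    simp only [dotProduct, hθm, ← Finset.sum_add_distrib, Finset.sum_div]
    exact Finset.sum_congr rfl fun i _ => by ring
  have hexp_mid : exp (θ ⬝ᵥ T x) * exp (θq ⬝ᵥ T x) = exp (θm ⬝ᵥ T x) ^ 2 := by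
    rw [← exp_add, ← exp_nat_mul, hmid]
    ring_nf
  have hsq : p θ x * p θq x = ((√(Z θ * Z θq) / Z θm)⁻¹ * p θm x) ^ 2 := by
    simp only [density_eq_div hZpos hp]
    rw [div_mul_div_comm, mul_mul_mul_comm, hexp_mid]
    have := hZpos θ; have := hZpos θq; have := hZpos θm
    field_simp
    rw [sq_sqrt (by positivity), mul_assoc]
  exact hsq ▸ sqrt_sq (mul_nonneg (inv_nonneg.2 (div_nonneg (sqrt_nonneg _) (hZpos θm).le))
    (density_nonneg hh hp θm x))

end ExponentialFamily

theorem min_pq_lower_bound_general {d k : ℕ}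
    (h : (Fin d → ℝ) → ℝ) (hh : ∀ x, 0 ≤ h x)
    (T : (Fin d → ℝ) → Fin k → ℝ)
    (Z : (Fin k → ℝ) → ℝ)
    (hZ : ∀ θ', Z θ' = ∫ x, h x * Real.exp (∑ i, θ' i * T x i))
    (hZpos : ∀ θ', 0 < Z θ')
    (p : (Fin k → ℝ) → (Fin d → ℝ) → ℝ)
    (hp : ∀ θ' x, p θ' x = h x * Real.exp ((∑ i, θ' i * T x i) - Real.log (Z θ')))
    (lammax : ℝ)
    (hmom : ∀ θ' (u : Fin k → ℝ), ∑ i, u i ^ 2 = 1 →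
      ∫ x, p θ' x * (∑ i, u i * T x i) ^ 2 ≤ lammax)
    (θ θq θm : Fin k → ℝ) (hθm : ∀ i, θm i = (θ i + θq i) / 2)
    (v : Fin k → ℝ) (hv : ∑ i, v i ^ 2 = 1) :
    (1 / (2 * lammax)) * (Real.sqrt (Z θ * Z θq) / Z θm)⁻¹ ^ 2 *
        (∫ x, p θm x * (∑ i, v i * T x i) ^ 2) ^ 2 ≤
      ∫ x, min (p θ x) (p θq x) * (∑ i, v i * T x i) ^ 2 := by
  have hp0 := density_nonneg hh hp
  have hmoment := integrable_density_mul_sq (μ := volume) hh hZ hZpos hp (v := v)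
  have hCS := sq_integral_sqrt_mul_mul_le (hp0 θ) (hp0 θq) (fun x => sq_nonneg (v ⬝ᵥ T x))
    (hmoment θ) (hmoment θq)
  simp only [sqrt_density_mul_density hh hZpos hp hθm, mul_assoc, integral_const_mul] at hCS
  have hsum : ∫ x, (p θ x + p θq x) * (v ⬝ᵥ T x) ^ 2 ≤ 2 * lammax := by
    simp only [add_mul]
    rw [integral_add (hmoment θ) (hmoment θq), two_mul]
    exact add_le_add (hmom θ v hv) (hmom θq v hv)
  have hlam : 0 ≤ lammax :=
    (integral_nonneg fun x => mul_nonneg (hp0 θ x) (sq_nonneg _)).trans (hmom θ v hv)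
  have hmin : 0 ≤ ∫ x, min (p θ x) (p θq x) * (v ⬝ᵥ T x) ^ 2 :=
    integral_nonneg fun x => mul_nonneg (le_min (hp0 θ x) (hp0 θq x)) (sq_nonneg _)
  calc 1 / (2 * lammax) * (√(Z θ * Z θq) / Z θm)⁻¹ ^ 2 * (∫ x, p θm x * (v ⬝ᵥ T x) ^ 2) ^ 2
      = ((√(Z θ * Z θq) / Z θm)⁻¹ * ∫ x, p θm x * (v ⬝ᵥ T x) ^ 2) ^ 2 / (2 * lammax) := by
        ring
    _ ≤ _ := div_le_of_le_mul₀ (by positivity) hmin (hCS.trans (by gcongr))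

/-- For exponential family densities `p = p_θ`, `q = p_{θq}` and any unit vector `v`:
`∫ min{p,q}(vᵀT)² ≥ (1/(2 λmax)) · B⁻² · (E_{(θ+θq)/2}[(vᵀT)²])²`, where
`B = √(Z(θ)Z(θq))/Z((θ+θq)/2)` and `λmax` uniformly bounds the largest eigenvalue of
`E_{θ'}[T Tᵀ]`. -/
theorem min_pq_lower_bound {d k : ℕ}
    (h : (Fin d → ℝ) → ℝ) (hh : ∀ x, 0 ≤ h x)
    (T : (Fin d → ℝ) → Fin k → ℝ)
    (Z : (Fin k → ℝ) → ℝ)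
    (hZ : ∀ θ', Z θ' = ∫ x, h x * Real.exp (∑ i, θ' i * T x i))
    (hZpos : ∀ θ', 0 < Z θ')
    (p : (Fin k → ℝ) → (Fin d → ℝ) → ℝ)
    (hp : ∀ θ' x, p θ' x = h x * Real.exp ((∑ i, θ' i * T x i) - Real.log (Z θ')))
    (lammax : ℝ) (hlampos : 0 < lammax)
    (hmom : ∀ θ' (u : Fin k → ℝ), ∑ i, u i ^ 2 = 1 →
      ∫ x, p θ' x * (∑ i, u i * T x i) ^ 2 ≤ lammax)
    (θ θq θm : Fin k → ℝ) (hθm : ∀ i, θm i = (θ i + θq i) / 2)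
    (v : Fin k → ℝ) (hv : ∑ i, v i ^ 2 = 1)
    (hint1 : Integrable (fun x => min (p θ x) (p θq x) * (∑ i, v i * T x i) ^ 2))
    (hint2 : Integrable (fun x => p θm x * (∑ i, v i * T x i) ^ 2)) :
    (1 / (2 * lammax)) * (Real.sqrt (Z θ * Z θq) / Z θm)⁻¹ ^ 2 *
        (∫ x, p θm x * (∑ i, v i * T x i) ^ 2) ^ 2 ≤
      ∫ x, min (p θ x) (p θq x) * (∑ i, v i * T x i) ^ 2 :=
  min_pq_lower_bound_general h hh T Z hZ hZpos p hp lammax hmom θ θq θm hθm v hv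
end

section
/- For 1-dimensional Gaussian NCE with p*(x) = N(R,1) and q(x) = N(0,1), the maximum eigenvalue of the Hessian of the NCE loss at the optimum τ*, with sufficient statistic T(x) = [x, −1], satisfies σ_max(∇²L(τ*)) ≤ (R/√(2π)) exp(−R²/8) for R sufficiently large. -/
/-!
The NCE weight `p* q / (p* + q)` is at most `min p* q`, and `(v₀ x - v₁)² ≤ x² + 1` by
Cauchy–Schwarz. Bounding the weight by `q = φ` right of the midpoint `R / 2` and by
`p* = φ(R - ·)` left of it, the reflection `x ↦ R - x` turns both halves into the Gaussian tail
`∫_{R/2}^∞ (x² + 1) φ`. On `(a, ∞)` the integrand is dominated by the exact derivative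
`-((x + 2 / a) φ(x))'`, so this tail is at most `(R / 2 + 4 / R) φ(R / 2)`, and for `R ≥ 3` the
total is at most `R φ(R / 2) = (R / √(2π)) e^{-R² / 8}`.
-/

open MeasureTheory

/-- Unit-variance Gaussian density with mean `μ`. -/
noncomputable def gaussPdf (μ x : ℝ) : ℝ :=
  (1 / Real.sqrt (2 * Real.pi)) * Real.exp (-(x - μ) ^ 2 / 2)

open Real Set Filter Topology Polynomial

lemma gaussPdf_pos (μ x : ℝ) : 0 < gaussPdf μ x := by
  unfold gaussPdf
  positivity

lemma gaussPdf_eq_gaussPdf_zero_sub (μ x : ℝ) : gaussPdf μ x = gaussPdf 0 (μ - x) := by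
  unfold gaussPdf
  ring_nf

lemma hasDerivAt_gaussPdf (μ x : ℝ) :
    HasDerivAt (gaussPdf μ) (-(x - μ) * gaussPdf μ x) x := by
  have h : HasDerivAt (fun y => -(y - μ) ^ 2 / 2) (-(x - μ)) x :=
    (((hasDerivAt_id' x).sub_const μ).fun_pow 2).neg.div_const 2 |>.congr_deriv (by ring)
  refine (h.exp.const_mul (1 / √(2 * π))).congr_deriv ?_
  unfold gaussPdf
  ring

lemma integrable_pow_mul_gaussPdf_zero (n : ℕ) :
    Integrable fun x => x ^ n * gaussPdf 0 x := by
  have h := (integrable_rpow_mul_exp_neg_mul_sq (b := 1 / 2) (by norm_num)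
    (s := n) (by linarith [n.cast_nonneg (α := ℝ)])).const_mul (1 / √(2 * π))
  refine h.congr (ae_of_all _ fun x => ?_)
  simp only [gaussPdf, rpow_natCast]
  ring_nf

lemma integrable_eval_mul_gaussPdf_zero (P : ℝ[X]) :
    Integrable fun x => P.eval x * gaussPdf 0 x := by
  induction P using Polynomial.induction_on' with
  | add P Q hP hQ => simpa only [eval_add, add_mul] using hP.fun_add hQ
  | monomial n c =>
    simpa only [eval_monomial, mul_assoc] using (integrable_pow_mul_gaussPdf_zero n).const_mul c

lemma integrable_sq_add_one_mul_gaussPdf_zero :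
    Integrable fun x => (x ^ 2 + 1) * gaussPdf 0 x :=
  (integrable_eval_mul_gaussPdf_zero (X ^ 2 + 1)).congr (ae_of_all _ fun x => by simp)

lemma integral_Ioi_quadratic_mul_gaussPdf_zero (a c : ℝ) :
    ∫ x in Ioi a, (x ^ 2 + c * x - 1) * gaussPdf 0 x = (a + c) * gaussPdf 0 a := by
  have hderiv (x : ℝ) : HasDerivAt (fun y => -((y + c) * gaussPdf 0 y))
      ((x ^ 2 + c * x - 1) * gaussPdf 0 x) x := by
    refine (((hasDerivAt_id' x).add_const c).fun_mul (hasDerivAt_gaussPdf 0 x)).fun_neg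
      |>.congr_deriv ?_
    ring
  have hint : Integrable fun x => (x ^ 2 + c * x - 1) * gaussPdf 0 x :=
    (integrable_eval_mul_gaussPdf_zero (X ^ 2 + C c * X - 1)).congr (ae_of_all _ fun x => by simp)
  have hlim : Tendsto (fun y => -((y + c) * gaussPdf 0 y)) atTop (𝓝 0) :=
    tendsto_zero_of_hasDerivAt_of_integrableOn_Ioi (a := 0) (fun x _ => hderiv x)
      hint.integrableOn
      ((integrable_eval_mul_gaussPdf_zero (X + C c)).neg.congr
        (ae_of_all _ fun x => by simp)).integrableOn
  rw [integral_Ioi_of_hasDerivAt_of_tendsto' (fun x _ => hderiv x) hint.integrableOn hlim]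
  ring

lemma integral_Ioi_sq_add_one_mul_gaussPdf_zero_le {a : ℝ} (ha : 0 < a) :
    ∫ x in Ioi a, (x ^ 2 + 1) * gaussPdf 0 x ≤ (a + 2 / a) * gaussPdf 0 a := by
  rw [← integral_Ioi_quadratic_mul_gaussPdf_zero a (2 / a)]
  refine setIntegral_mono_on ?_ ?_ measurableSet_Ioi fun x hx => ?_
  · exact integrable_sq_add_one_mul_gaussPdf_zero.integrableOn
  · exact ((integrable_eval_mul_gaussPdf_zero (X ^ 2 + C (2 / a) * X - 1)).congr
      (ae_of_all _ fun x => by simp)).integrableOn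
  · have : 2 ≤ 2 / a * x := by
      rw [div_mul_eq_mul_div, le_div_iff₀ ha]
      linarith [mem_Ioi.mp hx]
    gcongr
    · exact (gaussPdf_pos 0 x).le
    · linarith

lemma mul_div_add_le_right {a b : ℝ} (ha : 0 ≤ a) (hb : 0 ≤ b) : a * b / (a + b) ≤ b :=
  div_le_of_le_mul₀ (add_nonneg ha hb) hb (by nlinarith)

lemma mul_div_add_le_left {a b : ℝ} (ha : 0 ≤ a) (hb : 0 ≤ b) : a * b / (a + b) ≤ a := by
  simpa only [mul_comm a b, add_comm a b] using mul_div_add_le_right hb ha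

lemma nce_integrand_le_indicator_add_indicator {R x : ℝ} (hR : 0 ≤ R) {v : Fin 2 → ℝ}
    (hv : v 0 ^ 2 + v 1 ^ 2 = 1) :
    gaussPdf R x * gaussPdf 0 x / (gaussPdf R x + gaussPdf 0 x) * (v 0 * x - v 1) ^ 2 ≤
      (Ici (R / 2)).indicator (fun y => (y ^ 2 + 1) * gaussPdf 0 y) x +
        (Ici (R / 2)).indicator (fun y => (y ^ 2 + 1) * gaussPdf 0 y) (R - x) := by
  have hcs : (v 0 * x - v 1) ^ 2 ≤ x ^ 2 + 1 := by nlinarith [sq_nonneg (v 0 + v 1 * x)]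
  have hp := (gaussPdf_pos R x).le
  have hq := (gaussPdf_pos 0 x).le
  have hind_nonneg (y : ℝ) :
      0 ≤ (Ici (R / 2)).indicator (fun y => (y ^ 2 + 1) * gaussPdf 0 y) y :=
    indicator_nonneg (fun y _ => mul_nonneg (by positivity) (gaussPdf_pos 0 y).le) y
  rcases le_total (R / 2) x with hx | hx
  · calc _ ≤ (x ^ 2 + 1) * gaussPdf 0 x := by
          rw [mul_comm (x ^ 2 + 1)]
          exact mul_le_mul (mul_div_add_le_right hp hq) hcs (sq_nonneg _) hq
      _ ≤ _ := by
          rw [indicator_of_mem (mem_Ici.mpr hx)]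
          exact le_add_of_nonneg_right (hind_nonneg _)
  · -- `p*(x) = φ(R - x)`, and `x² ≤ (R - x)²` for `x ≤ R / 2`
    calc _ ≤ ((R - x) ^ 2 + 1) * gaussPdf 0 (R - x) := by
          rw [mul_comm ((R - x) ^ 2 + 1), ← gaussPdf_eq_gaussPdf_zero_sub]
          have hsq : (v 0 * x - v 1) ^ 2 ≤ (R - x) ^ 2 + 1 := by
            nlinarith [mul_nonneg hR (by linarith : 0 ≤ R - 2 * x)]
          exact mul_le_mul (mul_div_add_le_left hp hq) hsq (sq_nonneg _) hp
      _ ≤ _ := by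
          rw [indicator_of_mem (show R - x ∈ Ici (R / 2) from mem_Ici.mpr (by linarith))]
          exact le_add_of_nonneg_left (hind_nonneg _)

lemma integral_nce_integrand_le {R : ℝ} (hR : 0 < R) {v : Fin 2 → ℝ}
    (hv : v 0 ^ 2 + v 1 ^ 2 = 1) :
    ∫ x, gaussPdf R x * gaussPdf 0 x / (gaussPdf R x + gaussPdf 0 x) * (v 0 * x - v 1) ^ 2 ≤
      2 * ((R / 2 + 2 / (R / 2)) * gaussPdf 0 (R / 2)) := by
  set M := (Ici (R / 2)).indicator (fun y => (y ^ 2 + 1) * gaussPdf 0 y)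
  have hM : Integrable M := integrable_sq_add_one_mul_gaussPdf_zero.indicator measurableSet_Ici
  have hMR : Integrable fun x => M (R - x) := hM.comp_sub_left R
  calc _ ≤ ∫ x, (M x + M (R - x)) := by
        refine integral_mono_of_nonneg (ae_of_all _ fun x => ?_) (hM.add hMR)
          (ae_of_all _ fun x => nce_integrand_le_indicator_add_indicator hR.le hv)
        have := gaussPdf_pos R x
        have := gaussPdf_pos 0 x
        positivity
    _ = 2 * ∫ x in Ioi (R / 2), (x ^ 2 + 1) * gaussPdf 0 x := by
        rw [integral_add hM hMR, integral_sub_left_eq_self, integral_indicator measurableSet_Ici,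
          integral_Ici_eq_integral_Ioi]
        ring
    _ ≤ _ := by
        gcongr
        exact integral_Ioi_sq_add_one_mul_gaussPdf_zero_le (by positivity)

/-- For 1d Gaussian NCE with `p* = N(R,1)`, `q = N(0,1)` and sufficient statistic
`T(x) = [x, −1]`, the maximum eigenvalue of the Hessian of the NCE loss at the optimum,
`(1/2) ∫ (p* q/(p*+q)) T Tᵀ`, is at most `(R/√(2π)) exp(−R²/8)` for `R` large enough. -/
theorem nce_smoothness_at_optimum :
    ∃ R0 : ℝ, ∀ R : ℝ, R0 ≤ R → ∀ v : Fin 2 → ℝ, (v 0) ^ 2 + (v 1) ^ 2 = 1 →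
      (1 / 2 : ℝ) * ∫ x : ℝ,
          (gaussPdf R x * gaussPdf 0 x / (gaussPdf R x + gaussPdf 0 x)) *
            (v 0 * x - v 1) ^ 2 ≤
        (R / Real.sqrt (2 * Real.pi)) * Real.exp (-R ^ 2 / 8) := by
  refine ⟨3, fun R hR v hv => ?_⟩
  have hRpos : 0 < R := by linarith
  have hcoef : 2 / (R / 2) ≤ R / 2 := by
    rw [div_le_iff₀ (by positivity)]
    nlinarith
  have hφ := gaussPdf_pos 0 (R / 2)
  calc _ ≤ (1 / 2) * (2 * ((R / 2 + 2 / (R / 2)) * gaussPdf 0 (R / 2))) := by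
        gcongr
        exact integral_nce_integrand_le hRpos hv
    _ ≤ R * gaussPdf 0 (R / 2) := by nlinarith
    _ = _ := by
        unfold gaussPdf
        ring_nf
end
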